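/- arXiv:1310.1193 — 5 statements merged into one kernel-verified Lean document; each statement's English description precedes it below -/
import Mathlib

section
/- Let N, M be positive integers with M a proper divisor of N (M < N, M ∣ N), and let λ_0, …, λ_{N−1} ∈ ℂ satisfy: λ_i = λ_j if and only if q_i = q_j (where i = q_i·M + r_i with 0 ≤ r_i < M). Then the bilinear form (x,y) := tr((xy − yx)·D), where D = diag(λ_0, …, λ_{N−1}), is non-degenerate on the algebra A_{N,M}; that is, for every nonzero x ∈ A_{N,M} there exists y ∈ A_{N,M} with (x,y) ≠ 0. (Hence A_{N,M} with this form is an anti-Frobenius algebra.) -/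
open Matrix BigOperators Finset

/-- Membership in the algebra `A_{N,M}`: an `N × N` complex matrix belongs to `A_{N,M}` iff
for every residue class `r` mod `M` and every column `j`, the sum of the entries in column `j`
over rows congruent to `r` mod `M` vanishes. -/
def memA (N M : ℕ) (A : Matrix (Fin N) (Fin N) ℂ) : Prop :=
  ∀ r : Fin M, ∀ j : Fin N,
    ∑ i ∈ Finset.univ.filter (fun i : Fin N => (i : ℕ) % M = (r : ℕ)), A i j = 0

/-- The bilinear form `(x, y) = tr((xy - yx) ⬝ diag(λ))`. -/
noncomputable def form (N : ℕ) (lam : Fin N → ℂ) (x y : Matrix (Fin N) (Fin N) ℂ) : ℂ :=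
  Matrix.trace ((x * y - y * x) * Matrix.diagonal lam)

/-!
Writing `(x, y) = ∑ i j, y i j * x j i * (λ j - λ i)`, the form pairs `x` with the matrix unit
`E_{v u}` to `x u v * (λ u - λ v)`, which is nonzero as soon as `x u v ≠ 0` and `u`, `v` lie in
different blocks of size `M`. A single matrix unit is not in `A_{N,M}`, but `E_{v u} - E_{w u}`
is when `w` has the residue of `v` mod `M`; choosing `w` in the block of `u` makes the second
term vanish. Such an entry `x u v` exists: a block-diagonal matrix of `A_{N,M}` is zero, because
each of its residue-class column sums contains only one entry from the diagonal block.
-/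

lemma form_eq_sum (N : ℕ) (lam : Fin N → ℂ) (x y : Matrix (Fin N) (Fin N) ℂ) :
    form N lam x y = ∑ i, ∑ j, y i j * x j i * (lam j - lam i) := by
  simp only [form, trace, Matrix.diag, mul_diagonal]
  simp only [Matrix.sub_apply, mul_apply, sub_mul, sum_mul, sum_sub_distrib]
  rw [sum_comm (f := fun i j => x i j * y j i * lam i), ← sum_sub_distrib]
  refine sum_congr rfl fun i _ => ?_
  rw [← sum_sub_distrib]
  exact sum_congr rfl fun j _ => by ring

lemma form_single (N : ℕ) (lam : Fin N → ℂ) (x : Matrix (Fin N) (Fin N) ℂ) (a b : Fin N) :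
    form N lam x (single a b 1) = x b a * (lam b - lam a) := by
  rw [form_eq_sum, sum_eq_single a, sum_eq_single b]
  · simp
  · intro j _ hj
    simp [Ne.symm hj]
  · simp
  · intro i _ hi
    simp [Ne.symm hi]
  · simp

lemma form_sub_right (N : ℕ) (lam : Fin N → ℂ) (x y z : Matrix (Fin N) (Fin N) ℂ) :
    form N lam x (y - z) = form N lam x y - form N lam x z := by
  simp only [form, mul_sub, sub_mul, trace_sub]
  ring

lemma memA_single_sub_single (N M : ℕ) {a b : Fin N} (hab : (a : ℕ) % M = (b : ℕ) % M)
    (j : Fin N) : memA N M (single a j 1 - single b j 1) := by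
  intro r k
  rcases eq_or_ne j k with rfl | hjk
  · simp [single_apply, sum_ite_eq, hab]
  · simp [hjk]

lemma eq_zero_of_memA_of_forall_div_ne (N M : ℕ) (hM : 0 < M) {x : Matrix (Fin N) (Fin N) ℂ}
    (hx : memA N M x) (hblock : ∀ u v : Fin N, (u : ℕ) / M ≠ (v : ℕ) / M → x u v = 0) :
    x = 0 := by
  ext i j
  by_cases hij : (i : ℕ) / M = (j : ℕ) / M
  · have hcol := hx ⟨(i : ℕ) % M, Nat.mod_lt _ hM⟩ j
    rwa [sum_eq_single_of_mem i (by simp)] at hcol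
    intro b hb hbi
    refine hblock b j fun hbj => hbi (Fin.ext (Nat.ext_div_modEq (hbj.trans hij.symm) ?_))
    exact (mem_filter.1 hb).2
  · exact hblock i j hij

lemma exists_div_eq_mod_eq (N M : ℕ) (hM : 0 < M) (hMN : M ∣ N) (u v : Fin N) :
    ∃ w : Fin N, (w : ℕ) / M = (u : ℕ) / M ∧ (w : ℕ) % M = (v : ℕ) % M := by
  have hw : (u : ℕ) / M * M + (v : ℕ) % M < N := by
    have hu : (u : ℕ) / M < N / M := Nat.div_lt_div_of_lt_of_dvd hMN u.isLt
    calc (u : ℕ) / M * M + (v : ℕ) % M < ((u : ℕ) / M + 1) * M := by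
          rw [add_mul, one_mul]; exact Nat.add_lt_add_left (Nat.mod_lt _ hM) _
      _ ≤ N / M * M := Nat.mul_le_mul_right _ hu
      _ = N := Nat.div_mul_cancel hMN
  refine ⟨⟨_, hw⟩, ?_, ?_⟩
  · simp [Nat.add_div_of_dvd_right, hM]
  · simp

theorem form_nondegenerate_on_Asub_general (N M : ℕ) (hM : 0 < M) (hMN : M ∣ N)
    (lam : Fin N → ℂ)
    (hlam : ∀ i j : Fin N, lam i = lam j ↔ (i : ℕ) / M = (j : ℕ) / M) :
    ∀ x : Matrix (Fin N) (Fin N) ℂ, memA N M x → x ≠ 0 →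
      ∃ y : Matrix (Fin N) (Fin N) ℂ, memA N M y ∧ form N lam x y ≠ 0 := by
  intro x hx hx0
  obtain ⟨u, v, huv, hxuv⟩ : ∃ u v : Fin N, (u : ℕ) / M ≠ (v : ℕ) / M ∧ x u v ≠ 0 := by
    by_contra! h
    exact hx0 (eq_zero_of_memA_of_forall_div_ne N M hM hx h)
  obtain ⟨w, hwu, hwv⟩ := exists_div_eq_mod_eq N M hM hMN u v
  refine ⟨single v u 1 - single w u 1, memA_single_sub_single N M hwv.symm u, ?_⟩
  have hlam_uw : lam u - lam w = 0 := sub_eq_zero.2 ((hlam u w).2 hwu.symm)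
  rw [form_sub_right, form_single, form_single, hlam_uw, mul_zero, sub_zero]
  exact mul_ne_zero hxuv (sub_ne_zero.2 (mt (hlam u v).1 huv))

/-- If `λ_i = λ_j ↔ ⌊i/M⌋ = ⌊j/M⌋`, then the form `(x,y) = tr((xy-yx)·diag(λ))` is
non-degenerate on `A_{N,M}`, i.e. `A_{N,M}` is an anti-Frobenius algebra. -/
theorem form_nondegenerate_on_Asub (N M : ℕ) (hM : 0 < M) (hMN : M ∣ N) (hlt : M < N)
    (lam : Fin N → ℂ)
    (hlam : ∀ i j : Fin N, lam i = lam j ↔ (i : ℕ) / M = (j : ℕ) / M) :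
    ∀ x : Matrix (Fin N) (Fin N) ℂ, memA N M x → x ≠ 0 →
      ∃ y : Matrix (Fin N) (Fin N) ℂ, memA N M y ∧ form N lam x y ≠ 0 :=
  form_nondegenerate_on_Asub_general N M hM hMN lam hlam
end

section
/- Let N, M be positive integers with M a proper divisor of N, and let λ_0, …, λ_{N−1} ∈ ℂ satisfy: λ_i = λ_j if and only if q_i = q_j. Define a tensor r with components r^{ab}_{cd} ∈ ℂ (indices in {0,…,N−1}) by r^{ab}_{cd} := (δ^a_d − δ^a_{d̄_c})(δ^b_c − δ^b_{c̄_d}) / (λ_c − λ_d) when q_c ≠ q_d, and r^{ab}_{cd} := 0 when q_c = q_d. Then r is a skew-symmetric solution of the associative Yang–Baxter equation: r^{γε}_{αβ} = −r^{εγ}_{βα} for all indices, and Σ_σ ( r^{λσ}_{αβ} r^{μν}_{στ} + r^{μσ}_{βτ} r^{νλ}_{σα} + r^{νσ}_{τα} r^{λμ}_{σβ} ) = 0 for all indices α, β, τ, λ, μ, ν. -/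
open BigOperators Finset

/-- A tensor `r` (with `r a b c d` denoting the component `r^{ab}_{cd}`) is a skew-symmetric
solution of the associative Yang–Baxter equation. -/
def IsAYBESolution (N : ℕ) (r : Fin N → Fin N → Fin N → Fin N → ℂ) : Prop :=
  (∀ γ ε α β : Fin N, r γ ε α β = - r ε γ β α) ∧
  (∀ α β τ lam mu nu : Fin N,
    ∑ σ : Fin N,
      (r lam σ α β * r mu nu σ τ + r mu σ β τ * r nu lam σ α + r nu σ τ α * r lam mu σ β)
      = 0)

/-- For indices `i j : Fin N`, `ibar N M hM hMN i j` is the index `ī_j = q_j·M + r_i` having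
the remainder of `i` and the quotient of `j` upon division by `M`. -/
def ibar (N M : ℕ) (hM : 0 < M) (hMN : M ∣ N) (i j : Fin N) : Fin N :=
  ⟨(j : ℕ) / M * M + (i : ℕ) % M, by
    have h1 : (i : ℕ) % M < M := Nat.mod_lt _ hM
    have h2 : (j : ℕ) / M < N / M := Nat.div_lt_div_of_lt_of_dvd hMN j.isLt
    have h3 : ((j : ℕ) / M + 1) * M ≤ (N / M) * M := Nat.mul_le_mul_right _ h2
    have h4 : (N / M) * M = N := Nat.div_mul_cancel hMN
    rw [add_one_mul] at h3
    omega⟩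

/-- The tensor `r^{ab}_{cd} = (δ^a_d − δ^a_{d̄_c})(δ^b_c − δ^b_{c̄_d})/(λ_c − λ_d)` for
`q_c ≠ q_d`, and `0` otherwise. -/
noncomputable def rTensor (N M : ℕ) (hM : 0 < M) (hMN : M ∣ N) (lam : Fin N → ℂ)
    (a b c d : Fin N) : ℂ :=
  if (c : ℕ) / M ≠ (d : ℕ) / M then
    ((if a = d then (1 : ℂ) else 0) - (if a = ibar N M hM hMN d c then (1 : ℂ) else 0)) *
      ((if b = c then (1 : ℂ) else 0) - (if b = ibar N M hM hMN c d then (1 : ℂ) else 0)) /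
      (lam c - lam d)
  else 0

/-! Summing over `σ` against `δ^σ_c − δ^σ_{c̄_d}` collapses each product in the equation to two
terms. Splitting `δ^a_x − δ^a_z = (δ^a_x − δ^a_y) + (δ^a_y − δ^a_z)`, the cyclic sum becomes
`−P (xy + yz + zx)` with `P` a product of three such differences and `x = (λ_α − λ_β)⁻¹`,
`y = (λ_β − λ_τ)⁻¹`, `z = (λ_τ − λ_α)⁻¹`; this holds uniformly thanks to the convention `0⁻¹ = 0`.
If two of `λ_α, λ_β, λ_τ` coincide then `P = 0`; otherwise `xy + yz + zx = 0` by partial fractions. -/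

lemma inv_sub_mul_inv_sub_cyclic {K : Type*} [Field K] {a b c : K} (hab : a ≠ b) (hbc : b ≠ c)
    (hca : c ≠ a) :
    (a - b)⁻¹ * (b - c)⁻¹ + (b - c)⁻¹ * (c - a)⁻¹ + (c - a)⁻¹ * (a - b)⁻¹ = 0 := by
  have hab' := sub_ne_zero_of_ne hab
  have hbc' := sub_ne_zero_of_ne hbc
  have hca' := sub_ne_zero_of_ne hca
  field_simp
  ring

section BlockTensor

variable {N : ℕ}

def diracDiff (x y a : Fin N) : ℂ :=
  (if a = x then 1 else 0) - (if a = y then 1 else 0)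

@[simp]
lemma diracDiff_self (x a : Fin N) : diracDiff x x a = 0 :=
  sub_self _

lemma diracDiff_add_diracDiff (x y z a : Fin N) :
    diracDiff x y a + diracDiff y z a = diracDiff x z a := by
  unfold diracDiff
  ring

lemma sum_diracDiff_mul (x y : Fin N) (f : Fin N → ℂ) :
    ∑ σ, diracDiff x y σ * f σ = f x - f y := by
  simp [diracDiff, sub_mul, Finset.sum_sub_distrib, ite_mul]

/-- `rTensor` with `ī_j` abstracted to `bar i j`. -/
noncomputable def blockTensor (lam : Fin N → ℂ) (bar : Fin N → Fin N → Fin N) (a b c d : Fin N) :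
    ℂ :=
  diracDiff d (bar d c) a * diracDiff c (bar c d) b / (lam c - lam d)

variable (lam : Fin N → ℂ) (bar : Fin N → Fin N → Fin N)

lemma blockTensor_swap (a b c d : Fin N) :
    blockTensor lam bar a b c d = -blockTensor lam bar b a d c := by
  rw [blockTensor, blockTensor, ← neg_sub (lam c), div_neg, neg_neg, mul_comm]

lemma sum_blockTensor_mul (a c d : Fin N) (f : Fin N → ℂ) :
    ∑ σ, blockTensor lam bar a σ c d * f σ =
      diracDiff d (bar d c) a / (lam c - lam d) * (f c - f (bar c d)) := by
  rw [← sum_diracDiff_mul c (bar c d) f, Finset.mul_sum]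
  refine Finset.sum_congr rfl fun σ _ => ?_
  rw [blockTensor]
  ring

lemma sum_blockTensor_mul_blockTensor
    (hbar_right : ∀ i j k, bar i (bar j k) = bar i k)
    (hbar_left : ∀ i j k, bar (bar i j) k = bar i k)
    (hlam_bar : ∀ i j, lam (bar i j) = lam j) (l m n α β τ : Fin N) :
    ∑ σ, blockTensor lam bar l σ α β * blockTensor lam bar m n σ τ =
      diracDiff β (bar β α) l / (lam α - lam β) *
        (diracDiff τ (bar τ α) m * diracDiff α (bar α τ) n / (lam α - lam τ) -
          diracDiff τ (bar τ β) m * diracDiff (bar α β) (bar α τ) n / (lam β - lam τ)) := by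
  rw [sum_blockTensor_mul]
  simp only [blockTensor, hbar_right, hbar_left, hlam_bar]

lemma blockTensor_cyclic_sum
    (hbar_right : ∀ i j k, bar i (bar j k) = bar i k)
    (hbar_left : ∀ i j k, bar (bar i j) k = bar i k)
    (hlam_bar : ∀ i j, lam (bar i j) = lam j) (α β τ l m n : Fin N) :
    ∑ σ, (blockTensor lam bar l σ α β * blockTensor lam bar m n σ τ +
        blockTensor lam bar m σ β τ * blockTensor lam bar n l σ α +
        blockTensor lam bar n σ τ α * blockTensor lam bar l m σ β) =
      -(diracDiff β (bar β α) l * diracDiff τ (bar τ β) m * diracDiff α (bar α τ) n) *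
        ((lam α - lam β)⁻¹ * (lam β - lam τ)⁻¹ + (lam β - lam τ)⁻¹ * (lam τ - lam α)⁻¹ +
          (lam τ - lam α)⁻¹ * (lam α - lam β)⁻¹) := by
  simp only [Finset.sum_add_distrib,
    sum_blockTensor_mul_blockTensor lam bar hbar_right hbar_left hlam_bar]
  rw [eq_sub_of_add_eq (diracDiff_add_diracDiff β (bar β τ) (bar β α) l),
    eq_sub_of_add_eq (diracDiff_add_diracDiff τ (bar τ α) (bar τ β) m),
    eq_sub_of_add_eq (diracDiff_add_diracDiff α (bar α β) (bar α τ) n),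
    ← neg_sub (lam τ) (lam α), ← neg_sub (lam α) (lam β), ← neg_sub (lam β) (lam τ)]
  simp only [div_eq_mul_inv, inv_neg]
  ring

theorem blockTensor_isAYBESolution
    (hbar_right : ∀ i j k, bar i (bar j k) = bar i k)
    (hbar_left : ∀ i j k, bar (bar i j) k = bar i k)
    (hlam_bar : ∀ i j, lam (bar i j) = lam j)
    (hbar_self : ∀ i j, lam i = lam j → bar i j = i) :
    IsAYBESolution N (blockTensor lam bar) := by
  refine ⟨fun γ ε α β => blockTensor_swap lam bar γ ε α β, fun α β τ l m n => ?_⟩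
  rw [blockTensor_cyclic_sum lam bar hbar_right hbar_left hlam_bar]
  by_cases hαβ : lam α = lam β
  · simp [hbar_self β α hαβ.symm]
  by_cases hβτ : lam β = lam τ
  · simp [hbar_self τ β hβτ.symm]
  by_cases hτα : lam τ = lam α
  · simp [hbar_self α τ hτα.symm]
  rw [inv_sub_mul_inv_sub_cyclic hαβ hβτ hτα, mul_zero]

end BlockTensor

section Ibar

variable {N M : ℕ} (hM : 0 < M) (hMN : M ∣ N)

lemma ibar_val (i j : Fin N) : (ibar N M hM hMN i j : ℕ) = (j : ℕ) / M * M + (i : ℕ) % M :=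
  rfl

lemma ibar_div (i j : Fin N) : (ibar N M hM hMN i j : ℕ) / M = (j : ℕ) / M := by
  rw [ibar_val, Nat.add_comm, Nat.add_mul_div_right _ _ hM, Nat.div_eq_of_lt (Nat.mod_lt _ hM), Nat.zero_add]

lemma ibar_mod (i j : Fin N) : (ibar N M hM hMN i j : ℕ) % M = (i : ℕ) % M := by
  rw [ibar_val, Nat.add_comm, Nat.add_mul_mod_self_right, Nat.mod_mod]

lemma ibar_ibar_right (i j k : Fin N) :
    ibar N M hM hMN i (ibar N M hM hMN j k) = ibar N M hM hMN i k := by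
  ext
  rw [ibar_val hM hMN i, ibar_val hM hMN i, ibar_div]

lemma ibar_ibar_left (i j k : Fin N) :
    ibar N M hM hMN (ibar N M hM hMN i j) k = ibar N M hM hMN i k := by
  ext
  rw [ibar_val hM hMN _ k, ibar_val hM hMN i k, ibar_mod]

lemma ibar_of_div_eq {i j : Fin N} (h : (i : ℕ) / M = (j : ℕ) / M) :
    ibar N M hM hMN i j = i := by
  ext
  rw [ibar_val, ← h, Nat.div_add_mod']

lemma rTensor_eq_blockTensor (lam : Fin N → ℂ) :
    rTensor N M hM hMN lam = blockTensor lam (ibar N M hM hMN) := by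
  ext a b c d
  rw [rTensor, blockTensor]
  -- when `q_c = q_d` the numerator vanishes, as `d̄_c = d`
  by_cases h : (c : ℕ) / M = (d : ℕ) / M
  · rw [if_neg (not_not_intro h), ibar_of_div_eq hM hMN h.symm, diracDiff_self, zero_mul, zero_div]
  · rw [if_pos h]
    rfl

end Ibar

theorem rTensor_is_AYBE_solution_general (N M : ℕ) (hM : 0 < M) (hMN : M ∣ N)
    (lam : Fin N → ℂ)
    (hlam : ∀ i j : Fin N, lam i = lam j ↔ (i : ℕ) / M = (j : ℕ) / M) :
    IsAYBESolution N (rTensor N M hM hMN lam) := by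
  rw [rTensor_eq_blockTensor]
  exact blockTensor_isAYBESolution lam (ibar N M hM hMN) (ibar_ibar_right hM hMN)
    (ibar_ibar_left hM hMN) (fun i j => (hlam _ _).2 (ibar_div hM hMN i j))
    (fun i j h => ibar_of_div_eq hM hMN ((hlam i j).1 h))

/-- If `λ_i = λ_j ↔ q_i = q_j`, then the tensor
`r^{ab}_{cd} = (δ^a_d − δ^a_{d̄_c})(δ^b_c − δ^b_{c̄_d})/(λ_c − λ_d)` (for `q_c ≠ q_d`,
`0` otherwise) is a skew-symmetric solution of the associative Yang–Baxter equation. -/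
theorem rTensor_is_AYBE_solution (N M : ℕ) (hM : 0 < M) (hMN : M ∣ N) (hlt : M < N)
    (lam : Fin N → ℂ)
    (hlam : ∀ i j : Fin N, lam i = lam j ↔ (i : ℕ) / M = (j : ℕ) / M) :
    IsAYBESolution N (rTensor N M hM hMN lam) :=
  rTensor_is_AYBE_solution_general N M hM hMN lam hlam
end

section
/- Let N ≥ 2 and let λ_0, …, λ_{N−1} ∈ ℂ be pairwise distinct. Define a tensor r with components r^{ab}_{cd} ∈ ℂ (indices in {0,…,N−1}) by: for all α ≠ β, r^{αβ}_{αβ} = r^{βα}_{αβ} = r^{αα}_{βα} = 1/(λ_α − λ_β) and r^{αα}_{αβ} = −1/(λ_α − λ_β), and all other components equal to 0. Then r is a skew-symmetric solution of the associative Yang–Baxter equation: r^{γε}_{αβ} = −r^{εγ}_{βα} for all indices, and Σ_σ ( r^{λσ}_{αβ} r^{μν}_{στ} + r^{μσ}_{βτ} r^{νλ}_{σα} + r^{νσ}_{τα} r^{λμ}_{σβ} ) = 0 for all indices α, β, τ, λ, μ, ν. -/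
open BigOperators Finset

/-- The tensor with components (for `α ≠ β`)
`r^{αβ}_{αβ} = r^{βα}_{αβ} = r^{αα}_{βα} = 1/(λ_α − λ_β)`, `r^{αα}_{αβ} = −1/(λ_α − λ_β)`,
all other components being `0`.  Here `r a b c d` denotes `r^{ab}_{cd}`. -/
noncomputable def rONS (N : ℕ) (lam : Fin N → ℂ) (a b c d : Fin N) : ℂ :=
  if a ≠ b ∧ a = c ∧ b = d then 1 / (lam a - lam b)
  else if a ≠ b ∧ a = d ∧ b = c then 1 / (lam c - lam d)
  else if a = b ∧ d = a ∧ c ≠ a then 1 / (lam a - lam c)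
  else if a = b ∧ c = a ∧ d ≠ a then -(1 / (lam a - lam d))
  else 0

/-! With `w(c,d) = (λ_c - λ_d)⁻¹` and `e_i` the standard basis vectors, the tensor is
`r^{ls}_{cd} = -w(c,d) (e_c - e_d)_l (e_c - e_d)_s`, so contracting its second upper index
against `X` gives `-w(c,d) (e_c - e_d)_l (X_c - X_d)`. Put `x = e_a - e_b`, `y = e_b - e_c`,
`z = e_c - e_a`; since `x + y + z = 0` and `w` is skew, the Yang–Baxter sum collapses to
`(w(a,b) w(b,c) + w(b,c) w(c,a) + w(c,a) w(a,b)) x_l y_m z_n`. If two of `a, b, c` coincide one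
of `x, y, z` vanishes; otherwise the scalar factor is
`((λ_a - λ_b) + (λ_b - λ_c) + (λ_c - λ_a)) / ((λ_a - λ_b)(λ_b - λ_c)(λ_c - λ_a)) = 0`. -/

theorem inv_mul_inv_add_inv_mul_inv_add_inv_mul_inv_eq_zero {K : Type*} [Field K] {x y z : K}
    (hx : x ≠ 0) (hy : y ≠ 0) (hz : z ≠ 0) (h : x + y + z = 0) :
    x⁻¹ * y⁻¹ + y⁻¹ * z⁻¹ + z⁻¹ * x⁻¹ = 0 := by
  field_simp
  linear_combination h

theorem inv_sub_swap {K : Type*} [DivisionRing K] (a b : K) : (b - a)⁻¹ = -(a - b)⁻¹ := by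
  rw [← neg_sub, inv_neg]

section RootTensor

variable {ι K : Type*} [DecidableEq ι] [CommRing K]

def rootVec (c d : ι) : ι → K := Pi.single c 1 - Pi.single d 1

@[simp]
theorem rootVec_self (c : ι) : (rootVec c c : ι → K) = 0 :=
  sub_self _

theorem rootVec_swap (c d : ι) : (rootVec d c : ι → K) = -rootVec c d :=
  (neg_sub _ _).symm

theorem rootVec_add_rootVec (a b c : ι) :
    (rootVec a b : ι → K) + rootVec b c = rootVec a c := by
  simp only [rootVec]
  abel

theorem sum_rootVec_mul [Fintype ι] (c d : ι) (X : ι → K) :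
    ∑ σ, rootVec c d σ * X σ = X c - X d := by
  simp [rootVec, sub_mul, Finset.sum_sub_distrib, Pi.single_apply]

def rootTensor (w : ι → ι → K) (l s c d : ι) : K :=
  -w c d * rootVec c d l * rootVec c d s

variable {w : ι → ι → K}

theorem rootTensor_swap (hw : ∀ c d, w d c = -w c d) (l s c d : ι) :
    rootTensor w s l d c = -rootTensor w l s c d := by
  simp only [rootTensor, hw c d, rootVec_swap c d, Pi.neg_apply]
  ring

theorem sum_rootTensor_mul [Fintype ι] (l c d : ι) (X : ι → K) :
    ∑ σ, rootTensor w l σ c d * X σ = -w c d * rootVec c d l * (X c - X d) := by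
  simp_rw [rootTensor, mul_assoc, ← Finset.mul_sum, sum_rootVec_mul]

theorem sum_aybe_rootTensor [Fintype ι] (hw : ∀ c d, w d c = -w c d) (a b c l m n : ι) :
    ∑ σ, (rootTensor w l σ a b * rootTensor w m n σ c + rootTensor w m σ b c * rootTensor w n l σ a
        + rootTensor w n σ c a * rootTensor w l m σ b)
      = (w a b * w b c + w b c * w c a + w c a * w a b)
          * rootVec a b l * rootVec b c m * rootVec c a n := by
  have hac : (rootVec a c : ι → K) = rootVec a b + rootVec b c := (rootVec_add_rootVec a b c).symm
  have hca : (rootVec c a : ι → K) = -(rootVec a b + rootVec b c) := by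
    rw [rootVec_swap, hac]
  rw [Finset.sum_add_distrib, Finset.sum_add_distrib, sum_rootTensor_mul, sum_rootTensor_mul,
    sum_rootTensor_mul]
  simp only [rootTensor]
  rw [hw a b, hw b c, hw c a, rootVec_swap a b, rootVec_swap b c, hac, hca]
  simp only [Pi.add_apply, Pi.neg_apply]
  ring

end RootTensor

theorem isAYBESolution_rootTensor {N : ℕ} {w : Fin N → Fin N → ℂ}
    (hw : ∀ c d, w d c = -w c d)
    (hcyc : ∀ a b c, a ≠ b → b ≠ c → c ≠ a → w a b * w b c + w b c * w c a + w c a * w a b = 0) :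
    IsAYBESolution N (rootTensor w) := by
  refine ⟨fun γ ε α β => rootTensor_swap hw ε γ β α, fun a b c l m n => ?_⟩
  rw [sum_aybe_rootTensor hw]
  by_cases hab : a = b
  · simp [hab]
  by_cases hbc : b = c
  · simp [hbc]
  by_cases hca : c = a
  · simp [hca]
  simp [hcyc a b c hab hbc hca]

theorem rONS_eq_rootTensor (N : ℕ) (lam : Fin N → ℂ) :
    rONS N lam = rootTensor fun a b => (lam a - lam b)⁻¹ := by
  ext l s c d
  simp only [rONS, rootTensor, rootVec, Pi.sub_apply, Pi.single_apply, one_div]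
  by_cases hcd : c = d
  · subst hcd
    simp only [sub_self, mul_zero]
    split_ifs <;> simp_all
  have hswap := inv_sub_swap (lam c) (lam d)
  by_cases hlc : l = c <;> by_cases hld : l = d <;> by_cases hsc : s = c <;>
    by_cases hsd : s = d <;> subst_vars <;> simp [*, Ne.symm hcd, eq_comm]

theorem rONS_is_AYBE_solution_general (N : ℕ) (lam : Fin N → ℂ)
    (hlam : Function.Injective lam) :
    IsAYBESolution N (rONS N lam) := by
  rw [rONS_eq_rootTensor]
  refine isAYBESolution_rootTensor (fun c d => inv_sub_swap (lam c) (lam d)) ?_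
  intro a b c hab hbc hca
  exact inv_mul_inv_add_inv_mul_inv_add_inv_mul_inv_eq_zero (sub_ne_zero.2 (hlam.ne hab))
    (sub_ne_zero.2 (hlam.ne hbc)) (sub_ne_zero.2 (hlam.ne hca)) (by ring)

/-- For `N ≥ 2` and pairwise distinct `λ_0, …, λ_{N-1}`, the tensor `rONS` is a
skew-symmetric solution of the associative Yang–Baxter equation. -/
theorem rONS_is_AYBE_solution (N : ℕ) (hN : 2 ≤ N) (lam : Fin N → ℂ)
    (hlam : Function.Injective lam) :
    IsAYBESolution N (rONS N lam) :=
  rONS_is_AYBE_solution_general N lam hlam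
end

section
/- Let N be a positive integer and let r with components r^{γε}_{αβ} ∈ ℂ (indices in {0,…,N−1}) be a skew-symmetric solution of the associative Yang–Baxter equation. On the polynomial ring ℂ[x_0, …, x_{N−1}] define the bracket {f, g} := Σ_{α,β,γ,ε} r^{γε}_{αβ} · x_γ · x_ε · (∂f/∂x_α) · (∂g/∂x_β). Then this bracket is skew-symmetric ({f,g} = −{g,f} for all polynomials f, g) and satisfies the Jacobi identity {f, {g, h}} + {g, {h, f}} + {h, {f, g}} = 0 for all polynomials f, g, h; in particular {x_α, x_β} = Σ_{γ,ε} r^{γε}_{αβ} x_γ x_ε defines a quadratic Poisson bracket. -/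
/-!
The bracket is `{f, g} = Σ P_{αβ} ∂_α f ∂_β g` for the quadratic bivector
`P_{αβ} = Σ r^{γε}_{αβ} x_γ x_ε`, which is skew because `r` is. For a skew bivector,
`h ↦ J(f, g, h)` (the Jacobiator) is the derivation `[{f, ·}, {g, ·}] - {{f, g}, ·}`; as `J` is
cyclically symmetric, it vanishes as soon as it vanishes on generators, where it is the Schouten
expression `Σ_σ P_{aσ} ∂_σ P_{bc} + cyclic`. By skew-symmetry of `r` this expression equals
`W(c,b,a) - W(b,c,a) + cyclic`, where `W(α,β,τ)` is the cubic form with coefficients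
`Σ_σ r^{λσ}_{αβ} r^{μν}_{στ}`. Contracting the AYBE with `x_λ x_μ x_ν` shows that the cyclic sums
of `W` vanish: the equation relabels `λ, μ, ν` cyclically, which the commuting variables absorb.
-/

open BigOperators Finset MvPolynomial

/-- The quadratic bracket `{f, g} = Σ r^{γε}_{αβ} x_γ x_ε (∂f/∂x_α)(∂g/∂x_β)` on
`ℂ[x_0, …, x_{N-1}]` associated with a tensor `r`. -/
noncomputable def pBracket (N : ℕ) (r : Fin N → Fin N → Fin N → Fin N → ℂ)
    (f g : MvPolynomial (Fin N) ℂ) : MvPolynomial (Fin N) ℂ :=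
  ∑ α : Fin N, ∑ β : Fin N, ∑ γ : Fin N, ∑ ε : Fin N,
    MvPolynomial.C (r γ ε α β) * MvPolynomial.X γ * MvPolynomial.X ε *
      MvPolynomial.pderiv α f * MvPolynomial.pderiv β g

theorem Derivation.sum_apply {R A M ι : Type*} [CommSemiring R] [CommSemiring A] [Algebra R A]
    [AddCommMonoid M] [Module A M] [Module R M] (s : Finset ι) (D : ι → Derivation R A M) (a : A) :
    (∑ i ∈ s, D i) a = ∑ i ∈ s, D i a := by
  rw [← Derivation.coeFnAddMonoidHom_apply, map_sum, Finset.sum_apply]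
  rfl

namespace MvPolynomial

variable {σ R : Type*} [CommRing R] [Fintype σ] (P : σ → σ → MvPolynomial σ R)

noncomputable def hamiltonian (f : MvPolynomial σ R) :
    Derivation R (MvPolynomial σ R) (MvPolynomial σ R) :=
  ∑ a, ∑ b, (P a b * pderiv a f) • pderiv b

theorem hamiltonian_apply (f g : MvPolynomial σ R) :
    hamiltonian P f g = ∑ a, ∑ b, P a b * pderiv a f * pderiv b g := by
  simp only [hamiltonian, Derivation.sum_apply, Derivation.smul_apply, smul_eq_mul]

theorem hamiltonian_X (a : σ) (g : MvPolynomial σ R) :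
    hamiltonian P (X a) g = ∑ b, P a b * pderiv b g := by
  classical
  simp [hamiltonian_apply, pderiv_X, Pi.single_apply]

theorem hamiltonian_X_X (a b : σ) : hamiltonian P (X a) (X b) = P a b := by
  classical
  simp [hamiltonian_X, pderiv_X, Pi.single_apply]

variable {P}

theorem hamiltonian_antisymm (hP : ∀ a b, P a b = -P b a) (f g : MvPolynomial σ R) :
    hamiltonian P f g = -hamiltonian P g f := by
  rw [hamiltonian_apply, hamiltonian_apply, Finset.sum_comm, ← Finset.sum_neg_distrib]
  refine Finset.sum_congr rfl fun b _ => ?_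
  rw [← Finset.sum_neg_distrib]
  refine Finset.sum_congr rfl fun a _ => ?_
  rw [hP a b]
  ring

variable (P) in
noncomputable def jacobiator (f g h : MvPolynomial σ R) : MvPolynomial σ R :=
  hamiltonian P f (hamiltonian P g h) + hamiltonian P g (hamiltonian P h f) +
    hamiltonian P h (hamiltonian P f g)

theorem jacobiator_rotate (f g h : MvPolynomial σ R) :
    jacobiator P f g h = jacobiator P g h f := by
  unfold jacobiator; abel

theorem jacobiator_eq_commutator_sub (hP : ∀ a b, P a b = -P b a) (f g h : MvPolynomial σ R) :
    jacobiator P f g h =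
      (⁅hamiltonian P f, hamiltonian P g⁆ - hamiltonian P (hamiltonian P f g)) h := by
  rw [jacobiator, Derivation.sub_apply, Derivation.commutator_apply,
    hamiltonian_antisymm hP h f, map_neg, hamiltonian_antisymm hP h]
  ring

theorem jacobiator_eq_zero_of_X_right (hP : ∀ a b, P a b = -P b a) {f g : MvPolynomial σ R}
    (h : ∀ c, jacobiator P f g (X c) = 0) (k : MvPolynomial σ R) : jacobiator P f g k = 0 := by
  have hD : ⁅hamiltonian P f, hamiltonian P g⁆ - hamiltonian P (hamiltonian P f g) = 0 :=
    derivation_ext fun c => by rw [← jacobiator_eq_commutator_sub hP, h c, Derivation.zero_apply]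
  rw [jacobiator_eq_commutator_sub hP, hD, Derivation.zero_apply]

theorem jacobiator_eq_zero (hP : ∀ a b, P a b = -P b a)
    (h : ∀ a b c, jacobiator P (X a) (X b) (X c) = 0) (f g k : MvPolynomial σ R) :
    jacobiator P f g k = 0 := by
  refine jacobiator_eq_zero_of_X_right hP (fun c => ?_) k
  rw [← jacobiator_rotate]
  refine jacobiator_eq_zero_of_X_right hP (fun b => ?_) g
  rw [← jacobiator_rotate]
  exact jacobiator_eq_zero_of_X_right hP (fun a => h b c a) f

theorem jacobiator_X_X_X (a b c : σ) :
    jacobiator P (X a) (X b) (X c) =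
      ∑ s, (P a s * pderiv s (P b c) + P b s * pderiv s (P c a) + P c s * pderiv s (P a b)) := by
  simp only [jacobiator, hamiltonian_X_X]
  simp only [hamiltonian_X, Finset.sum_add_distrib]

end MvPolynomial

section Quadratic

variable {σ R : Type*} [CommRing R] [Fintype σ] (r : σ → σ → σ → σ → R)

noncomputable def quadBivector (a b : σ) : MvPolynomial σ R :=
  ∑ γ, ∑ ε, C (r γ ε a b) * X γ * X ε

theorem quadBivector_antisymm (hskew : ∀ γ ε α β, r γ ε α β = -r ε γ β α) (a b : σ) :
    quadBivector r a b = -quadBivector r b a := by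
  rw [quadBivector, quadBivector, Finset.sum_comm, ← Finset.sum_neg_distrib]
  refine Finset.sum_congr rfl fun ε _ => ?_
  rw [← Finset.sum_neg_distrib]
  refine Finset.sum_congr rfl fun γ _ => ?_
  rw [hskew, map_neg]
  ring

theorem pderiv_quadBivector (s b c : σ) :
    pderiv s (quadBivector r b c) = ∑ n, C (r s n b c + r n s b c) * X n := by
  classical
  simp only [quadBivector, map_sum, mul_assoc, Derivation.leibniz, pderiv_C, pderiv_X,
    Pi.single_apply, smul_eq_mul, add_zero, mul_add, Finset.sum_add_distrib, mul_ite,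
    mul_zero, mul_one, Finset.sum_ite_eq', Finset.mem_univ, if_true]
  rw [Finset.sum_comm, ← Finset.sum_add_distrib]
  simp only [Finset.sum_ite_eq', Finset.mem_univ, if_true, map_add, add_mul, add_comm]

noncomputable def aybeCubic (α β τ : σ) : MvPolynomial σ R :=
  ∑ l, ∑ m, ∑ n, ∑ s, C (r l s α β * r m n s τ) * (X l * X m * X n)

theorem aybeCubic_eq_sum_mul (α β τ : σ) :
    aybeCubic r α β τ = ∑ s, (∑ l, C (r l s α β) * X l) * quadBivector r s τ := by
  simp only [quadBivector, Finset.sum_mul]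
  simp only [Finset.mul_sum]
  rw [aybeCubic, eq_comm, Finset.sum_comm]
  refine Finset.sum_congr rfl fun l _ => ?_
  rw [← Finset.sum_comm_cycle]
  simp only [map_mul, mul_comm, mul_assoc, mul_left_comm]

theorem sum_quadBivector_mul_pderiv (hskew : ∀ γ ε α β, r γ ε α β = -r ε γ β α) (a b c : σ) :
    ∑ s, quadBivector r a s * pderiv s (quadBivector r b c) =
      aybeCubic r c b a - aybeCubic r b c a := by
  have hderiv : ∀ s, pderiv s (quadBivector r b c) =
      ∑ l, C (r l s b c) * X l - ∑ l, C (r l s c b) * X l := fun s => by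
    rw [pderiv_quadBivector, ← Finset.sum_sub_distrib]
    refine Finset.sum_congr rfl fun l _ => ?_
    rw [hskew s l b c, map_add, map_neg]
    ring
  rw [aybeCubic_eq_sum_mul, aybeCubic_eq_sum_mul, ← Finset.sum_sub_distrib]
  refine Finset.sum_congr rfl fun s _ => ?_
  rw [hderiv, quadBivector_antisymm r hskew a s]
  ring

end Quadratic

section AYBE

variable {N : ℕ} {r : Fin N → Fin N → Fin N → Fin N → ℂ}

theorem aybeCubic_cyclic (hr : IsAYBESolution N r) (α β τ : Fin N) :
    aybeCubic r α β τ + aybeCubic r β τ α + aybeCubic r τ α β = 0 := by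
  have h₂ : aybeCubic r β τ α =
      ∑ l, ∑ m, ∑ n, ∑ s, C (r m s β τ * r n l s α) * (X l * X m * X n) := by
    rw [aybeCubic, Finset.sum_comm_cycle]
    simp only [map_mul, mul_comm, mul_assoc]
  have h₃ : aybeCubic r τ α β =
      ∑ l, ∑ m, ∑ n, ∑ s, C (r n s τ α * r l m s β) * (X l * X m * X n) := by
    rw [aybeCubic, ← Finset.sum_comm_cycle]
    simp only [map_mul, mul_comm, mul_assoc, mul_left_comm]
  rw [h₂, h₃, aybeCubic]
  simp only [← Finset.sum_add_distrib, ← add_mul, ← map_add, ← Finset.sum_mul, ← map_sum, hr.2,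
    map_zero, zero_mul, Finset.sum_const_zero]

theorem jacobiator_quadBivector_X_X_X (hr : IsAYBESolution N r) (a b c : Fin N) :
    jacobiator (quadBivector r) (X a) (X b) (X c) = 0 := by
  rw [jacobiator_X_X_X]
  simp only [Finset.sum_add_distrib, sum_quadBivector_mul_pderiv r hr.1]
  linear_combination aybeCubic_cyclic hr c b a - aybeCubic_cyclic hr a b c

theorem pBracket_eq_hamiltonian (f g : MvPolynomial (Fin N) ℂ) :
    pBracket N r f g = hamiltonian (quadBivector r) f g := by
  simp only [hamiltonian_apply, pBracket, quadBivector, Finset.sum_mul]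

end AYBE

theorem pBracket_is_Poisson_general (N : ℕ)
    (r : Fin N → Fin N → Fin N → Fin N → ℂ) (hr : IsAYBESolution N r) :
    (∀ f g : MvPolynomial (Fin N) ℂ, pBracket N r f g = - pBracket N r g f) ∧
    (∀ f g h : MvPolynomial (Fin N) ℂ,
      pBracket N r f (pBracket N r g h) + pBracket N r g (pBracket N r h f) +
        pBracket N r h (pBracket N r f g) = 0) ∧
    (∀ α β : Fin N,
      pBracket N r (MvPolynomial.X α) (MvPolynomial.X β) =
        ∑ γ : Fin N, ∑ ε : Fin N,
          MvPolynomial.C (r γ ε α β) * MvPolynomial.X γ * MvPolynomial.X ε) := by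
  have hP := quadBivector_antisymm r hr.1
  simp only [pBracket_eq_hamiltonian]
  exact ⟨hamiltonian_antisymm hP, jacobiator_eq_zero hP (jacobiator_quadBivector_X_X_X hr),
    hamiltonian_X_X _⟩

/-- For a skew-symmetric solution `r` of the associative Yang–Baxter equation, the bracket
`{f, g} = Σ r^{γε}_{αβ} x_γ x_ε (∂f/∂x_α)(∂g/∂x_β)` is skew-symmetric, satisfies the Jacobi
identity, and satisfies `{x_α, x_β} = Σ r^{γε}_{αβ} x_γ x_ε` (a quadratic Poisson bracket). -/
theorem pBracket_is_Poisson (N : ℕ) (hN : 0 < N)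
    (r : Fin N → Fin N → Fin N → Fin N → ℂ) (hr : IsAYBESolution N r) :
    (∀ f g : MvPolynomial (Fin N) ℂ, pBracket N r f g = - pBracket N r g f) ∧
    (∀ f g h : MvPolynomial (Fin N) ℂ,
      pBracket N r f (pBracket N r g h) + pBracket N r g (pBracket N r h f) +
        pBracket N r h (pBracket N r f g) = 0) ∧
    (∀ α β : Fin N,
      pBracket N r (MvPolynomial.X α) (MvPolynomial.X β) =
        ∑ γ : Fin N, ∑ ε : Fin N,
          MvPolynomial.C (r γ ε α β) * MvPolynomial.X γ * MvPolynomial.X ε) :=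
  pBracket_is_Poisson_general N r hr
end

section
/- Let N ≥ 2. The (non-unital) complex algebra of N×N complex matrices whose last row is zero is isomorphic, as a non-unital ℂ-algebra, to the algebra A_{N,1} of N×N complex matrices all of whose column sums are zero. -/
open Matrix BigOperators Finset

/-- The non-unital algebra of `N × N` complex matrices whose last row is zero. -/
noncomputable def zeroLastRow (N : ℕ) (hN : 2 ≤ N) :
    NonUnitalSubalgebra ℂ (Matrix (Fin N) (Fin N) ℂ) where
  carrier := {A | ∀ j : Fin N, A ⟨N - 1, by omega⟩ j = 0}
  add_mem' := by
    intro a b ha hb j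
    simp [Matrix.add_apply, ha j, hb j]
  zero_mem' := by
    intro j
    simp
  smul_mem' := by
    intro c a ha j
    simp [Matrix.smul_apply, ha j]
  mul_mem' := by
    intro a b ha hb j
    simp only [Set.mem_setOf_eq] at ha ⊢
    simp [Matrix.mul_apply, ha]

/-- The non-unital algebra `A_{N,1}` of `N × N` complex matrices all of whose column sums
vanish. -/
noncomputable def colSumZero (N : ℕ) :
    NonUnitalSubalgebra ℂ (Matrix (Fin N) (Fin N) ℂ) where
  carrier := {A | ∀ j : Fin N, ∑ i : Fin N, A i j = 0}
  add_mem' := by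
    intro a b ha hb j
    simp [Matrix.add_apply, Finset.sum_add_distrib, ha j, hb j]
  zero_mem' := by
    intro j
    simp
  smul_mem' := by
    intro c a ha j
    simp [Matrix.smul_apply, ← Finset.mul_sum, ha j]
  mul_mem' := by
    intro a b ha hb j
    simp only [Matrix.mul_apply]
    rw [Finset.sum_comm]
    simp only [Set.mem_setOf_eq] at ha ⊢
    simp [← Finset.sum_mul, ha]

/-!
Both algebras are left annihilators `{A | v ᵥ* A = 0}` of a row vector: `v = e_N` for the
matrices with zero last row and `v = (1, …, 1)` for those with vanishing column sums. If `T` is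
invertible with `e_N ᵥ* T = (1, …, 1)` (e.g. the identity with its last row replaced by ones),
then `(1, …, 1) ᵥ* (T⁻¹ A T) = (e_N ᵥ* A) ᵥ* T`, so conjugation `A ↦ T⁻¹ A T` maps the first
algebra onto the second.
-/

namespace AlgEquiv

variable {R A B : Type*} [CommSemiring R] [Semiring A] [Semiring B] [Algebra R A] [Algebra R B]

def restrictNonUnitalSubalgebras (e : A ≃ₐ[R] B) (S : NonUnitalSubalgebra R A)
    (T : NonUnitalSubalgebra R B) (h : ∀ a, a ∈ S ↔ e a ∈ T) : S ≃ₗ[R] T :=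
  e.toLinearEquiv.ofSubmodules S.toSubmodule T.toSubmodule <| by
    ext b
    rw [Submodule.mem_map_equiv]
    exact (h _).trans (by simp)

theorem restrictNonUnitalSubalgebras_mul (e : A ≃ₐ[R] B) (S : NonUnitalSubalgebra R A)
    (T : NonUnitalSubalgebra R B) (h : ∀ a, a ∈ S ↔ e a ∈ T) (x y : S) :
    e.restrictNonUnitalSubalgebras S T h (x * y) =
      e.restrictNonUnitalSubalgebras S T h x * e.restrictNonUnitalSubalgebras S T h y :=
  Subtype.ext (map_mul e (x : A) y)

end AlgEquiv

namespace Matrix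

section CommSemiring

variable {n R : Type*} [Fintype n] [CommSemiring R]

def vecMulAnnihilator (v : n → R) : NonUnitalSubalgebra R (Matrix n n R) where
  carrier := {A | v ᵥ* A = 0}
  add_mem' hA hB := by simp_all [vecMul_add]
  zero_mem' := vecMul_zero v
  smul_mem' c A hA := by simp_all [vecMul_smul]
  mul_mem' hA _ := by simp_all [← vecMul_vecMul]

theorem mem_vecMulAnnihilator {v : n → R} {A : Matrix n n R} :
    A ∈ vecMulAnnihilator v ↔ v ᵥ* A = 0 :=
  Iff.rfl

theorem conj_mem_vecMulAnnihilator_iff [DecidableEq n] (u : (Matrix n n R)ˣ) (v : n → R)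
    (A : Matrix n n R) :
    (↑u⁻¹ : Matrix n n R) * A * (u : Matrix n n R) ∈
        vecMulAnnihilator (v ᵥ* (u : Matrix n n R)) ↔ A ∈ vecMulAnnihilator v := by
  rw [mem_vecMulAnnihilator, mem_vecMulAnnihilator, ← vecMul_vecMul, ← vecMul_vecMul,
    vecMul_vecMul v, Units.mul_inv, vecMul_one]
  exact (vecMul_injective_of_isUnit u.isUnit).eq_iff' (zero_vecMul _)

end CommSemiring

theorem exists_unit_single_vecMul_eq_one {n R : Type*} [Fintype n] [DecidableEq n] [CommRing R]
    (i : n) : ∃ u : (Matrix n n R)ˣ, Pi.single i 1 ᵥ* (u : Matrix n n R) = 1 := by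
  have hdet : ((1 : Matrix n n R).updateRow i 1).det = 1 := by
    have := det_updateRow_sum (1 : Matrix n n R) i 1
    rwa [← vecMul_eq_sum, vecMul_one, Pi.one_apply, one_smul, det_one] at this
  obtain ⟨u, hu⟩ := (isUnit_iff_isUnit_det _).2 (hdet ▸ isUnit_one)
  refine ⟨u, ?_⟩
  rw [hu, single_one_vecMul]
  ext j
  simp

end Matrix

theorem zeroLastRow_eq_vecMulAnnihilator (N : ℕ) (hN : 2 ≤ N) :
    zeroLastRow N hN = vecMulAnnihilator (Pi.single ⟨N - 1, by omega⟩ 1) := by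
  ext A
  rw [mem_vecMulAnnihilator, single_one_vecMul, funext_iff]
  rfl

theorem colSumZero_eq_vecMulAnnihilator (N : ℕ) :
    colSumZero N = vecMulAnnihilator 1 := by
  ext A
  rw [mem_vecMulAnnihilator, funext_iff]
  simp only [vecMul, dotProduct, Pi.one_apply, one_mul, Pi.zero_apply]
  rfl

/-- For `N ≥ 2`, the non-unital algebra of `N × N` matrices with zero last row is isomorphic,
as a non-unital `ℂ`-algebra, to the algebra `A_{N,1}` of matrices with vanishing column sums:
there is a `ℂ`-linear bijection between them preserving multiplication. -/
theorem zeroLastRow_iso_colSumZero (N : ℕ) (hN : 2 ≤ N) :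
    ∃ f : zeroLastRow N hN ≃ₗ[ℂ] colSumZero N,
      ∀ x y : zeroLastRow N hN, f (x * y) = f x * f y := by
  obtain ⟨u, hu⟩ := exists_unit_single_vecMul_eq_one (R := ℂ) (⟨N - 1, by omega⟩ : Fin N)
  let conj := MulSemiringAction.toAlgEquiv ℂ (Matrix (Fin N) (Fin N) ℂ) (ConjAct.toConjAct u⁻¹)
  have hconj (A : Matrix (Fin N) (Fin N) ℂ) : A ∈ zeroLastRow N hN ↔ conj A ∈ colSumZero N := by
    have hconj_apply :
        conj A = (↑u⁻¹ : Matrix (Fin N) (Fin N) ℂ) * A * (u : Matrix (Fin N) (Fin N) ℂ) := by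
      rw [MulSemiringAction.toAlgEquiv_apply, ConjAct.units_smul_def, ConjAct.ofConjAct_toConjAct,
        inv_inv]
    rw [hconj_apply, zeroLastRow_eq_vecMulAnnihilator, colSumZero_eq_vecMulAnnihilator, ← hu,
      conj_mem_vecMulAnnihilator_iff]
  exact ⟨conj.restrictNonUnitalSubalgebras _ _ hconj,
    conj.restrictNonUnitalSubalgebras_mul _ _ hconj⟩
end
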